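/- Let 0 < R₁ < 1 < R₂ < ∞ and b ∈ (R₁,1). If x̃ ≥ 2 is a real number with Δ_{x̃,b} > 0, then the function x ↦ Δ_{x,b} is strictly increasing on [x̃,∞) and Δ_{x,b} > 0 for every x ≥ x̃. In particular, if an integer m₀ ≥ 2 satisfies Δ_{m₀,b} > 0, then Δ_{m,b} > 0 for every integer m ≥ m₀. -/

import Mathlib

/-!
With `u = e^{-α}` one has `1 - u^{2x} = 2 u^x sinh(αx)`, so `E` and both summands of the fraction
in `Π` take the form `2 sinh(αx) sinh(βx) / (x sinh(σx))` with `α, β > 0` and `α + β ≤ σ`. The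
logarithmic derivative of this is `(F(αx) + F(βx) - 1 - F(σx)) / x` with `F(t) = t coth t`, and it
is negative because `F - 1` is nonnegative (`tanh t ≤ t`) and strictly superadditive on `(0, ∞)`
(`sinh 2t > 2t`). Hence `E > 0` decreases and `Π` increases. For `x ≥ 2` a rational identity in
`b^x, R₁^x, R₂^x`, Bernoulli's inequality `2(1 - b^x) ≤ x(1 - b²)` and `𝔠_b ≥ 0` give
`Π + 2E ≥ 0`, so `Δ(x̃) > 0` forces `Π(x̃) > 2E(x̃)`, and from there on `Δ = Π²/4 - E²` increases.
-/

open Real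

noncomputable section

namespace DCV1

/-- The constant `𝔠_b` of the annulus `{R₁ < |z| < R₂}`. -/
def frakC (R1 R2 b : ℝ) : ℝ :=
  (-(b^2/2) * Real.log b - (1 - b^2)/4 - ((1 - b^2)/2) * Real.log R2) / Real.log (R1/R2)

/-- `f_t(x) = (1−t^{2x})/x`. -/
def ff (t x : ℝ) : ℝ := (1 - t ^ (2*x)) / x

/-- `g_{t₁,t₂}(x) = (1−t₁^{2x})(1−t₂^{2x})`. -/
def gg (t1 t2 x : ℝ) : ℝ := (1 - t1 ^ (2*x)) * (1 - t2 ^ (2*x))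

/-- `Π_{x,b}`. -/
def PiX (R1 R2 b x : ℝ) : ℝ :=
  (1 - b^2) * (b^2 + 2 * frakC R1 R2 b) / b^2
    - (gg (b/R2) (R1/b) x + gg (1/R2) R1 x) / (x^2 * ff (R1/R2) x)

/-- `E_{x,b}`. -/
def EX (R1 R2 b x : ℝ) : ℝ :=
  b ^ x * gg (1/R2) (R1/b) x / (x^2 * ff (R1/R2) x)

/-- The extended discriminant `Δ_{x,b} = Π_{x,b}²/4 − E_{x,b}²`. -/
def DeltaX (R1 R2 b x : ℝ) : ℝ := PiX R1 R2 b x ^ 2 / 4 - EX R1 R2 b x ^ 2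

open Set

def tcoth (t : ℝ) : ℝ := t * cosh t / sinh t

lemma sinh_le_mul_cosh {t : ℝ} (ht : 0 ≤ t) : sinh t ≤ t * cosh t := by
  have hderiv (y : ℝ) : HasDerivAt (fun y => y * cosh y - sinh y) (y * sinh y) y :=
    (((hasDerivAt_id' y).fun_mul (hasDerivAt_cosh y)).fun_sub
      (hasDerivAt_sinh y)).congr_deriv (by ring)
  have hmono : MonotoneOn (fun y => y * cosh y - sinh y) (Ici 0) := by
    refine monotoneOn_of_deriv_nonneg (convex_Ici 0) ?_ ?_ fun y hy => ?_
    · exact (continuous_id.mul continuous_cosh |>.sub continuous_sinh).continuousOn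
    · exact fun y _ => (hderiv y).differentiableAt.differentiableWithinAt
    · rw [interior_Ici, mem_Ioi] at hy
      rw [(hderiv y).deriv]
      exact mul_nonneg hy.le (sinh_nonneg_iff.mpr hy.le)
  simpa using hmono self_mem_Ici ht ht

lemma one_le_tcoth {t : ℝ} (ht : 0 < t) : 1 ≤ tcoth t := by
  rw [tcoth, le_div_iff₀ (sinh_pos_iff.mpr ht), one_mul]
  exact sinh_le_mul_cosh ht.le

lemma self_lt_sinh_mul_cosh {t : ℝ} (ht : 0 < t) : t < sinh t * cosh t := by
  have := self_lt_sinh_iff.mpr (mul_pos two_pos ht)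
  rw [sinh_two_mul] at this
  linarith

lemma tcoth_add_tcoth_lt {a b : ℝ} (ha : 0 < a) (hb : 0 < b) :
    tcoth a + tcoth b < tcoth (a + b) + 1 := by
  have hsa := sinh_pos_iff.mpr ha
  have hsb := sinh_pos_iff.mpr hb
  have hsab := sinh_pos_iff.mpr (add_pos ha hb)
  have key : tcoth (a + b) + 1 - tcoth a - tcoth b
      = ((sinh a * cosh a - a) * sinh b ^ 2 + (sinh b * cosh b - b) * sinh a ^ 2)
        / (sinh a * sinh b * sinh (a + b)) := by
    unfold tcoth
    field_simp
    rw [cosh_add, sinh_add]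
    linear_combination (-a * sinh b ^ 2) * cosh_sq a + (-b * sinh a ^ 2) * cosh_sq b
  have : 0 < tcoth (a + b) + 1 - tcoth a - tcoth b := by
    rw [key]
    have := mul_pos (sub_pos.mpr (self_lt_sinh_mul_cosh ha)) (pow_pos hsb 2)
    have := mul_pos (sub_pos.mpr (self_lt_sinh_mul_cosh hb)) (pow_pos hsa 2)
    positivity
  linarith

lemma tcoth_add_tcoth_lt_of_add_le {a b s : ℝ} (ha : 0 < a) (hb : 0 < b) (hs : a + b ≤ s) :
    tcoth a + tcoth b < tcoth s + 1 := by
  rcases hs.eq_or_lt with rfl | hlt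
  · exact tcoth_add_tcoth_lt ha hb
  · have hd : 0 < s - (a + b) := sub_pos.mpr hlt
    have := tcoth_add_tcoth_lt (add_pos ha hb) hd
    rw [add_sub_cancel] at this
    linarith [tcoth_add_tcoth_lt ha hb, one_le_tcoth hd]

def sinhRatio (α β σ x : ℝ) : ℝ := sinh (α * x) * sinh (β * x) / (x * sinh (σ * x))

lemma sinhRatio_pos {α β σ x : ℝ} (hα : 0 < α) (hβ : 0 < β) (hσ : 0 < σ) (hx : 0 < x) :
    0 < sinhRatio α β σ x := by
  have := sinh_pos_iff.mpr (mul_pos hα hx)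
  have := sinh_pos_iff.mpr (mul_pos hβ hx)
  have := sinh_pos_iff.mpr (mul_pos hσ hx)
  unfold sinhRatio
  positivity

lemma hasDerivAt_log_sinh_mul {α x : ℝ} (h : 0 < α * x) :
    HasDerivAt (fun x => log (sinh (α * x))) (tcoth (α * x) / x) x := by
  have hx : x ≠ 0 := by rintro rfl; simp at h
  exact (((hasDerivAt_id' x).const_mul α).sinh.log (sinh_pos_iff.mpr h).ne').congr_deriv
    (by unfold tcoth; field_simp)

lemma log_sinhRatio {α β σ x : ℝ} (hα : 0 < α) (hβ : 0 < β) (hσ : 0 < σ) (hx : 0 < x) :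
    log (sinhRatio α β σ x)
      = log (sinh (α * x)) + log (sinh (β * x)) - log x - log (sinh (σ * x)) := by
  have := sinh_pos_iff.mpr (mul_pos hα hx)
  have := sinh_pos_iff.mpr (mul_pos hβ hx)
  have := sinh_pos_iff.mpr (mul_pos hσ hx)
  rw [sinhRatio, log_div (by positivity) (by positivity), log_mul (by positivity) (by positivity),
    log_mul (by positivity) (by positivity)]
  ring

lemma sinhRatio_strictAntiOn {α β σ : ℝ} (hα : 0 < α) (hβ : 0 < β) (hσ : α + β ≤ σ) :
    StrictAntiOn (sinhRatio α β σ) (Ioi 0) := by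
  have hσ0 : 0 < σ := by linarith
  have hderiv {x : ℝ} (hx : 0 < x) : HasDerivAt
      (fun x => log (sinh (α * x)) + log (sinh (β * x)) - log x - log (sinh (σ * x)))
      ((tcoth (α * x) + tcoth (β * x) - 1 - tcoth (σ * x)) / x) x :=
    (((hasDerivAt_log_sinh_mul (mul_pos hα hx)).add (hasDerivAt_log_sinh_mul (mul_pos hβ hx))).sub
      (hasDerivAt_log hx.ne')).sub (hasDerivAt_log_sinh_mul (mul_pos hσ0 hx)) |>.congr_deriv
      (by field_simp)
  have hlog : StrictAntiOn
      (fun x => log (sinh (α * x)) + log (sinh (β * x)) - log x - log (sinh (σ * x))) (Ioi 0) := by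
    refine strictAntiOn_of_deriv_neg (convex_Ioi 0)
      (fun x hx => (hderiv hx).continuousAt.continuousWithinAt) fun x hx => ?_
    rw [interior_Ioi, mem_Ioi] at hx
    rw [(hderiv hx).deriv]
    refine div_neg_of_neg_of_pos ?_ hx
    have := tcoth_add_tcoth_lt_of_add_le (mul_pos hα hx) (mul_pos hβ hx)
      (by nlinarith : α * x + β * x ≤ σ * x)
    linarith
  intro x hx y hy hxy
  rw [← log_lt_log_iff (sinhRatio_pos hα hβ hσ0 hy) (sinhRatio_pos hα hβ hσ0 hx),
    log_sinhRatio hα hβ hσ0 hx, log_sinhRatio hα hβ hσ0 hy]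
  exact hlog hx hy hxy

lemma one_sub_rpow_two_mul {t : ℝ} (ht : 0 < t) (x : ℝ) :
    1 - t ^ (2 * x) = 2 * t ^ x * sinh (-log t * x) := by
  rw [rpow_def_of_pos ht, rpow_def_of_pos ht, sinh_eq, neg_mul, neg_neg,
    show log t * (2 * x) = log t * x + log t * x by ring, exp_add, exp_neg]
  field_simp

def ggRatio (c u v x : ℝ) : ℝ := c ^ x * gg u v x / (x ^ 2 * ff (c * u * v) x)

lemma ggRatio_eq_sinhRatio {c u v x : ℝ} (hc : 0 < c) (hu : 0 < u) (hv : 0 < v) (hx : 0 < x)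
    (hcuv : c * u * v < 1) :
    ggRatio c u v x = 2 * sinhRatio (-log u) (-log v) (-log (c * u * v)) x := by
  have hw : 0 < c * u * v := by positivity
  have hs : 0 < sinh (-log (c * u * v) * x) :=
    sinh_pos_iff.mpr (mul_pos (neg_pos.mpr (log_neg hw hcuv)) hx)
  have hpow : c ^ x * (u ^ x * v ^ x) = (c * u * v) ^ x := by
    rw [mul_rpow (by positivity) hv.le, mul_rpow hc.le hu.le, mul_assoc]
  have : 0 < (c * u * v) ^ x := rpow_pos_of_pos hw x
  rw [ggRatio, gg, ff, sinhRatio, one_sub_rpow_two_mul hu, one_sub_rpow_two_mul hv,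
    one_sub_rpow_two_mul hw, ← hpow]
  field_simp

section ggRatio

variable {c u v : ℝ}

lemma mul_mul_lt_one (hc1 : c ≤ 1) (hu : u ∈ Ioo 0 1) (hv : v ∈ Ioo 0 1) : c * u * v < 1 := by
  have := hu.1
  have := hv.1
  calc c * u * v ≤ 1 * 1 * v := by gcongr; exact hu.2.le
    _ < 1 := by linarith [hv.2]

variable (hc0 : 0 < c) (hc1 : c ≤ 1) (hu : u ∈ Ioo 0 1) (hv : v ∈ Ioo 0 1)
include hc0 hc1 hu hv

lemma neg_log_add_neg_log_le : -log u + -log v ≤ -log (c * u * v) := by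
  rw [log_mul (by positivity [hu.1]) hv.1.ne', log_mul hc0.ne' hu.1.ne']
  linarith [log_nonpos hc0.le hc1]

lemma ggRatio_pos {x : ℝ} (hx : 0 < x) : 0 < ggRatio c u v x := by
  rw [ggRatio_eq_sinhRatio hc0 hu.1 hv.1 hx (mul_mul_lt_one hc1 hu hv)]
  have hα := neg_pos.mpr (log_neg hu.1 hu.2)
  have hβ := neg_pos.mpr (log_neg hv.1 hv.2)
  have hσ := neg_log_add_neg_log_le hc0 hc1 hu hv
  exact mul_pos two_pos (sinhRatio_pos hα hβ (by linarith) hx)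

lemma ggRatio_strictAntiOn : StrictAntiOn (ggRatio c u v) (Ioi 0) := by
  intro x hx y hy hxy
  rw [ggRatio_eq_sinhRatio hc0 hu.1 hv.1 hx (mul_mul_lt_one hc1 hu hv),
    ggRatio_eq_sinhRatio hc0 hu.1 hv.1 hy (mul_mul_lt_one hc1 hu hv)]
  have := sinhRatio_strictAntiOn (neg_pos.mpr (log_neg hu.1 hu.2))
    (neg_pos.mpr (log_neg hv.1 hv.2)) (neg_log_add_neg_log_le hc0 hc1 hu hv) hx hy hxy
  linarith

end ggRatio

lemma two_mul_one_sub_rpow_le {β x : ℝ} (hβ : 0 ≤ β) (hx : 2 ≤ x) :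
    2 * (1 - β ^ x) ≤ x * (1 - β ^ 2) := by
  have h := one_add_mul_self_le_rpow_one_add (by nlinarith : (-1 : ℝ) ≤ β ^ 2 - 1)
    (by linarith : (1 : ℝ) ≤ x / 2)
  rw [add_sub_cancel, ← rpow_natCast, ← rpow_mul hβ] at h
  norm_num at h
  rw [mul_div_cancel₀ x two_ne_zero] at h
  linarith

lemma rpow_two_mul {t : ℝ} (ht : 0 ≤ t) (x : ℝ) : t ^ (2 * x) = (t ^ x) ^ 2 := by
  rw [mul_comm, rpow_mul ht, rpow_two]

lemma gg_add_gg_sub_le {R1 R2 b : ℝ} (hR1 : 0 < R1) (hR2 : 0 < R2) (hb : 0 < b) (x : ℝ) :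
    gg (b / R2) (R1 / b) x + gg (1 / R2) R1 x - 2 * b ^ x * gg (1 / R2) (R1 / b) x
      ≤ 2 * (1 - b ^ x) * (1 - (R1 / R2) ^ (2 * x)) := by
  simp only [gg, rpow_two_mul (div_pos hb hR2).le, rpow_two_mul (div_pos hR1 hb).le,
    rpow_two_mul (div_pos one_pos hR2).le, rpow_two_mul hR1.le, rpow_two_mul (div_pos hR1 hR2).le,
    div_rpow hb.le hR2.le, div_rpow hR1.le hb.le, div_rpow zero_le_one hR2.le,
    div_rpow hR1.le hR2.le, one_rpow]
  set s := b ^ x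
  set a := R1 ^ x
  set r := R2 ^ x
  have hs : 0 < s := rpow_pos_of_pos hb x
  have hr : 0 < r := rpow_pos_of_pos hR2 x
  have key : 2 * (1 - s) * (1 - (a / r) ^ 2)
      - ((1 - (s / r) ^ 2) * (1 - (a / s) ^ 2) + (1 - (1 / r) ^ 2) * (1 - a ^ 2)
        - 2 * s * ((1 - (1 / r) ^ 2) * (1 - (a / s) ^ 2)))
      = (1 - s) ^ 2 * (a ^ 2 * r ^ 2 + s ^ 2 + 2 * a ^ 2 * s) / (s ^ 2 * r ^ 2) := by
    field_simp
    ring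
  have : 0 ≤ (1 - s) ^ 2 * (a ^ 2 * r ^ 2 + s ^ 2 + 2 * a ^ 2 * s) / (s ^ 2 * r ^ 2) := by
    positivity
  linarith

lemma frakC_nonneg {R1 R2 b : ℝ} (hR1 : 0 < R1) (hR12 : R1 < R2) (hR2 : 1 ≤ R2) (hb0 : 0 < b)
    (hb1 : b < 1) : 0 ≤ frakC R1 R2 b := by
  have hden : log (R1 / R2) < 0 := log_neg (by positivity) ((div_lt_one (by linarith)).mpr hR12)
  have hlogb : b ^ 2 - 1 ≤ 2 * b ^ 2 * log b := by
    have := one_sub_inv_le_log_of_pos (pow_pos hb0 2)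
    rw [log_pow] at this
    field_simp at this
    push_cast at this
    linarith
  have hnum : 0 ≤ ((1 - b ^ 2) / 2) * log R2 :=
    mul_nonneg (by nlinarith) (log_nonneg hR2)
  exact div_nonneg_of_nonpos (by nlinarith) hden.le

lemma one_sub_sq_le_mul_add_div_sq {b c : ℝ} (hb0 : 0 < b) (hb1 : b ≤ 1) (hc : 0 ≤ c) :
    1 - b ^ 2 ≤ (1 - b ^ 2) * (b ^ 2 + 2 * c) / b ^ 2 := by
  rw [le_div_iff₀ (by positivity)]
  have : 0 ≤ 1 - b ^ 2 := by nlinarith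
  nlinarith [mul_nonneg this hc]

lemma StrictMonoOn.sq_div_four_sub_sq {ι : Type*} [PartialOrder ι] {P E : ι → ℝ} {x₀ : ι}
    (hP : StrictMonoOn P (Ici x₀)) (hE : AntitoneOn E (Ici x₀)) (hE0 : ∀ x ∈ Ici x₀, 0 ≤ E x)
    (hPE : 0 ≤ P x₀ + 2 * E x₀) (hΔ : 0 < P x₀ ^ 2 / 4 - E x₀ ^ 2) :
    StrictMonoOn (fun x => P x ^ 2 / 4 - E x ^ 2) (Ici x₀) := by
  have hP₀ : 0 < P x₀ := by nlinarith [hE0 x₀ self_mem_Ici]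
  intro x hx y hy hxy
  have hPx : P x₀ ≤ P x := hP.monotoneOn self_mem_Ici hx (mem_Ici.mp hx)
  have hPxy : P x < P y := hP hx hy hxy
  have hExy : E y ≤ E x := hE hx hy hxy.le
  have hEy := hE0 y hy
  nlinarith

lemma div_mem_Ioo_zero_one {a c : ℝ} (ha : 0 < a) (hac : a < c) : a / c ∈ Ioo 0 1 :=
  ⟨div_pos ha (ha.trans hac), (div_lt_one (ha.trans hac)).mpr hac⟩

section Annulus

variable {R1 R2 b : ℝ}

lemma EX_eq_ggRatio (hb : b ≠ 0) (x : ℝ) : EX R1 R2 b x = ggRatio b (1 / R2) (R1 / b) x := by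
  rw [EX, ggRatio, show b * (1 / R2) * (R1 / b) = R1 / R2 by field_simp]

lemma PiX_eq_sub_ggRatio (hb : b ≠ 0) (x : ℝ) :
    PiX R1 R2 b x = (1 - b ^ 2) * (b ^ 2 + 2 * frakC R1 R2 b) / b ^ 2
      - (ggRatio 1 (b / R2) (R1 / b) x + ggRatio 1 (1 / R2) R1 x) := by
  simp only [PiX, ggRatio, one_rpow, one_mul, add_div]
  rw [show b / R2 * (R1 / b) = R1 / R2 by field_simp, one_div_mul_eq_div]

variable (hR1 : 0 < R1) (hR2 : 1 < R2) (hb1 : R1 < b) (hb2 : b < 1)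
include hR1 hR2 hb1 hb2

lemma EX_pos {x : ℝ} (hx : 0 < x) : 0 < EX R1 R2 b x := by
  rw [EX_eq_ggRatio (hR1.trans hb1).ne']
  exact ggRatio_pos (hR1.trans hb1) hb2.le (div_mem_Ioo_zero_one one_pos hR2)
    (div_mem_Ioo_zero_one hR1 hb1) hx

lemma EX_strictAntiOn : StrictAntiOn (EX R1 R2 b) (Ioi 0) := by
  simp only [funext (EX_eq_ggRatio (R1 := R1) (R2 := R2) (hR1.trans hb1).ne')]
  exact ggRatio_strictAntiOn (hR1.trans hb1) hb2.le (div_mem_Ioo_zero_one one_pos hR2)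
    (div_mem_Ioo_zero_one hR1 hb1)

lemma PiX_strictMonoOn : StrictMonoOn (PiX R1 R2 b) (Ioi 0) := by
  have hb0 : 0 < b := hR1.trans hb1
  intro x hx y hy hxy
  rw [PiX_eq_sub_ggRatio hb0.ne', PiX_eq_sub_ggRatio hb0.ne']
  have h₁ := ggRatio_strictAntiOn one_pos le_rfl (div_mem_Ioo_zero_one hb0 (hb2.trans hR2))
    (div_mem_Ioo_zero_one hR1 hb1) hx hy hxy
  have h₂ := ggRatio_strictAntiOn one_pos le_rfl (div_mem_Ioo_zero_one one_pos hR2)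
    ⟨hR1, hb1.trans hb2⟩ hx hy hxy
  linarith

lemma PiX_add_two_mul_EX_nonneg {x : ℝ} (hx : 2 ≤ x) :
    0 ≤ PiX R1 R2 b x + 2 * EX R1 R2 b x := by
  have hb0 : 0 < b := hR1.trans hb1
  have hx0 : 0 < x := by linarith
  have hR12 := div_mem_Ioo_zero_one hR1 (by linarith : R1 < R2)
  have hw : (R1 / R2) ^ (2 * x) < 1 := rpow_lt_one hR12.1.le hR12.2 (by linarith)
  have hD : x ^ 2 * ff (R1 / R2) x = x * (1 - (R1 / R2) ^ (2 * x)) := by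
    rw [ff]
    field_simp
  have hD0 : 0 < x * (1 - (R1 / R2) ^ (2 * x)) := mul_pos hx0 (sub_pos.mpr hw)
  have hK := one_sub_sq_le_mul_add_div_sq hb0 hb2.le
    (frakC_nonneg hR1 (by linarith) hR2.le hb0 hb2)
  have hfrac : (gg (b / R2) (R1 / b) x + gg (1 / R2) R1 x) / (x ^ 2 * ff (R1 / R2) x)
      - 2 * (b ^ x * gg (1 / R2) (R1 / b) x / (x ^ 2 * ff (R1 / R2) x)) ≤ 1 - b ^ 2 :=
    calc _ = (gg (b / R2) (R1 / b) x + gg (1 / R2) R1 x - 2 * b ^ x * gg (1 / R2) (R1 / b) x)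
          / (x * (1 - (R1 / R2) ^ (2 * x))) := by rw [hD]; ring
      _ ≤ 2 * (1 - b ^ x) * (1 - (R1 / R2) ^ (2 * x)) / (x * (1 - (R1 / R2) ^ (2 * x))) := by
          gcongr
          exact gg_add_gg_sub_le hR1 (by linarith) hb0 x
      _ = 2 * (1 - b ^ x) / x := mul_div_mul_right _ _ (sub_pos.mpr hw).ne'
      _ ≤ 1 - b ^ 2 := by
          rw [div_le_iff₀ hx0]
          linarith [two_mul_one_sub_rpow_le hb0.le hx]
  rw [PiX, EX]
  linarith

end Annulus

theorem discriminant_monotone_general (R1 R2 b : ℝ) (hR1 : 0 < R1) (hR2 : 1 < R2)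
    (hb1 : R1 < b) (hb2 : b < 1) :
    (∀ xt : ℝ, 2 ≤ xt → 0 < DeltaX R1 R2 b xt →
        StrictMonoOn (fun x => DeltaX R1 R2 b x) (Set.Ici xt) ∧
        ∀ x : ℝ, xt ≤ x → 0 < DeltaX R1 R2 b x) ∧
    (∀ m₀ : ℕ, 2 ≤ m₀ → 0 < DeltaX R1 R2 b (m₀ : ℝ) →
        ∀ m : ℕ, m₀ ≤ m → 0 < DeltaX R1 R2 b (m : ℝ)) := by
  have hreal (xt : ℝ) (hxt : 2 ≤ xt) (hΔ : 0 < DeltaX R1 R2 b xt) :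
      StrictMonoOn (fun x => DeltaX R1 R2 b x) (Ici xt) ∧ ∀ x, xt ≤ x → 0 < DeltaX R1 R2 b x := by
    have hpos : Ici xt ⊆ Ioi 0 := fun _ hx => (two_pos.trans_le hxt).trans_le hx
    have hmono : StrictMonoOn (fun x => DeltaX R1 R2 b x) (Ici xt) :=
      StrictMonoOn.sq_div_four_sub_sq ((PiX_strictMonoOn hR1 hR2 hb1 hb2).mono hpos)
        ((EX_strictAntiOn hR1 hR2 hb1 hb2).antitoneOn.mono hpos)
        (fun x hx => (EX_pos hR1 hR2 hb1 hb2 (hpos hx)).le)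
        (PiX_add_two_mul_EX_nonneg hR1 hR2 hb1 hb2 hxt) hΔ
    exact ⟨hmono, fun x hx => hΔ.trans_le (hmono.monotoneOn self_mem_Ici hx hx)⟩
  exact ⟨hreal, fun m₀ hm₀ hΔ m hm =>
    (hreal m₀ (by exact_mod_cast hm₀) hΔ).2 m (by exact_mod_cast hm)⟩

/-- If `x̃ ≥ 2` and `Δ_{x̃,b} > 0`, then `x ↦ Δ_{x,b}` is strictly increasing on `[x̃,∞)`
and strictly positive there; in particular, if an integer `m₀ ≥ 2` satisfies `Δ_{m₀,b} > 0`,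
then `Δ_{m,b} > 0` for every integer `m ≥ m₀`. -/
theorem discriminant_monotone (R1 R2 b : ℝ) (hR1 : 0 < R1) (hR1' : R1 < 1) (hR2 : 1 < R2)
    (hb1 : R1 < b) (hb2 : b < 1) :
    (∀ xt : ℝ, 2 ≤ xt → 0 < DeltaX R1 R2 b xt →
        StrictMonoOn (fun x => DeltaX R1 R2 b x) (Set.Ici xt) ∧
        ∀ x : ℝ, xt ≤ x → 0 < DeltaX R1 R2 b x) ∧
    (∀ m₀ : ℕ, 2 ≤ m₀ → 0 < DeltaX R1 R2 b (m₀ : ℝ) →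
        ∀ m : ℕ, m₀ ≤ m → 0 < DeltaX R1 R2 b (m : ℝ)) :=
  discriminant_monotone_general R1 R2 b hR1 hR2 hb1 hb2

end DCV1
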